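/- arXiv:2412.18372 — 2 statements merged into one kernel-verified Lean document; each statement's English description precedes it below -/
import Mathlib

section
/- Let [I,‖·‖_I] be a normed weighted holomorphic ideal and let [I^inj,‖·‖_{I^inj}] be its injective hull. Then [I,‖·‖_I] ≤ [I^inj,‖·‖_{I^inj}], and for every injective normed weighted holomorphic ideal [J,‖·‖_J] with [I,‖·‖_I] ≤ [J,‖·‖_J] one has [I^inj,‖·‖_{I^inj}] ≤ [J,‖·‖_J]; that is, [I^inj,‖·‖_{I^inj}] is the smallest injective normed weighted holomorphic ideal containing [I,‖·‖_I]. -/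
open scoped ENNReal
open Set

noncomputable section

universe u v w

/-- A bundled complex Banach space. -/
structure BanachSp : Type (u + 1) where
  α : Type u
  [grp : NormedAddCommGroup α]
  [mod : NormedSpace ℂ α]
  [cpl : CompleteSpace α]

attribute [instance] BanachSp.grp BanachSp.mod BanachSp.cpl

instance : CoeSort BanachSp (Type u) := ⟨BanachSp.α⟩

section Defs

variable {E : Type u} {F : Type v} [NormedAddCommGroup E] [NormedSpace ℂ E]
  [NormedAddCommGroup F] [NormedSpace ℂ F]

/-- `v` is a weight on `U`: continuous and strictly positive there. -/
def IsWeight (U : Set E) (v : E → ℝ) : Prop :=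
  ContinuousOn v U ∧ ∀ x ∈ U, 0 < v x

/-- `f` belongs to `H_v^∞(U, F)`: holomorphic on `U` with `sup_{x ∈ U} v x * ‖f x‖ < ∞`. -/
def HvBdd (U : Set E) (v : E → ℝ) (f : E → F) : Prop :=
  DifferentiableOn ℂ f U ∧ BddAbove ((fun x => v x * ‖f x‖) '' U)

/-- The weighted supremum norm `‖f‖_v = sup_{x ∈ U} v x * ‖f x‖`. -/
def hvNorm (U : Set E) (v : E → ℝ) (f : E → F) : ℝ :=
  sSup ((fun x => v x * ‖f x‖) '' U)

end Defs

section Iota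

variable (F : Type u) [NormedAddCommGroup F] [NormedSpace ℂ F]

/-- The closed unit ball of the dual space `F*`. -/
def BallDual : Type u := {φ : StrongDual ℂ F // ‖φ‖ ≤ 1}

instance : Nonempty (BallDual F) := ⟨⟨0, by simp⟩⟩

/-- `ℓ∞(B_{F*})`, the space of bounded scalar functions on the closed unit ball of `F*`. -/
abbrev Linf : Type u := lp (fun _ : BallDual F => ℂ) ∞

/-- The canonical embedding `ι_F : F → ℓ∞(B_{F*})`, `⟨ι_F y, φ⟩ = φ y`. -/
def iotaFun (y : F) : Linf F :=
  ⟨fun φ => φ.1 y, memℓp_infty ⟨‖y‖, by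
    rintro r ⟨φ, rfl⟩
    calc ‖φ.1 y‖ ≤ ‖φ.1‖ * ‖y‖ := φ.1.le_opNorm y
      _ ≤ 1 * ‖y‖ := by
          have := φ.2
          exact mul_le_mul_of_nonneg_right this (norm_nonneg y)
      _ = ‖y‖ := one_mul _⟩⟩

/-- The canonical embedding `ι_F : F → ℓ∞(B_{F*})` as a continuous linear map. -/
def iota : F →L[ℂ] Linf F :=
  LinearMap.mkContinuous
    { toFun := iotaFun F
      map_add' := by
        intro y z
        apply lp.ext
        rw [lp.coeFn_add]
        funext φ
        show φ.1 (y + z) = φ.1 y + φ.1 z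
        exact map_add φ.1 y z
      map_smul' := by
        intro c y
        apply lp.ext
        rw [lp.coeFn_smul]
        funext φ
        show φ.1 (c • y) = c • φ.1 y
        exact map_smul φ.1 c y }
    1 (by
      intro y
      rw [one_mul]
      refine lp.norm_le_of_forall_le (norm_nonneg y) fun φ => ?_
      calc ‖φ.1 y‖ ≤ ‖φ.1‖ * ‖y‖ := φ.1.le_opNorm y
        _ ≤ 1 * ‖y‖ := mul_le_mul_of_nonneg_right φ.2 (norm_nonneg y)
        _ = ‖y‖ := one_mul _)

/-- `ℓ∞(B_{F*})` as a bundled Banach space. -/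
def LinfSp : BanachSp.{u} := ⟨Linf F⟩

end Iota

/-- An assignment of a class of weighted holomorphic mappings, together with a
"norm" function, to every component `(U, v, F)`. -/
structure WHAssignment : Type (u + 1) where
  mem : ∀ (E : BanachSp.{u}) (U : Set E) (v : E → ℝ) (F : BanachSp.{u}), (E → F) → Prop
  nrm : ∀ (E : BanachSp.{u}) (U : Set E) (v : E → ℝ) (F : BanachSp.{u}), (E → F) → ℝ

/-- `[I, ‖·‖_I]` is a normed weighted holomorphic ideal. -/
structure IsNormedWHIdeal (I : WHAssignment.{u}) : Prop where
  mem_hv : ∀ (E : BanachSp.{u}) (U : Set E.α) (v : E.α → ℝ), IsOpen U → IsWeight U v →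
    ∀ (F : BanachSp.{u}) (f : E.α → F.α), I.mem E U v F f → HvBdd U v f
  zero_mem : ∀ (E : BanachSp.{u}) (U : Set E.α) (v : E.α → ℝ), IsOpen U → IsWeight U v →
    ∀ (F : BanachSp.{u}), I.mem E U v F (fun _ => 0)
  add_mem : ∀ (E : BanachSp.{u}) (U : Set E.α) (v : E.α → ℝ), IsOpen U → IsWeight U v →
    ∀ (F : BanachSp.{u}) (f g : E.α → F.α), I.mem E U v F f → I.mem E U v F g →
      I.mem E U v F (fun x => f x + g x)
  smul_mem : ∀ (E : BanachSp.{u}) (U : Set E.α) (v : E.α → ℝ), IsOpen U → IsWeight U v →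
    ∀ (F : BanachSp.{u}) (c : ℂ) (f : E.α → F.α), I.mem E U v F f →
      I.mem E U v F (fun x => c • f x)
  nrm_nonneg : ∀ (E : BanachSp.{u}) (U : Set E.α) (v : E.α → ℝ), IsOpen U → IsWeight U v →
    ∀ (F : BanachSp.{u}) (f : E.α → F.α), I.mem E U v F f → 0 ≤ I.nrm E U v F f
  nrm_eq_zero : ∀ (E : BanachSp.{u}) (U : Set E.α) (v : E.α → ℝ), IsOpen U → IsWeight U v →
    ∀ (F : BanachSp.{u}) (f : E.α → F.α), I.mem E U v F f → I.nrm E U v F f = 0 →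
      ∀ x ∈ U, f x = 0
  nrm_add_le : ∀ (E : BanachSp.{u}) (U : Set E.α) (v : E.α → ℝ), IsOpen U → IsWeight U v →
    ∀ (F : BanachSp.{u}) (f g : E.α → F.α), I.mem E U v F f → I.mem E U v F g →
      I.nrm E U v F (fun x => f x + g x) ≤ I.nrm E U v F f + I.nrm E U v F g
  nrm_smul : ∀ (E : BanachSp.{u}) (U : Set E.α) (v : E.α → ℝ), IsOpen U → IsWeight U v →
    ∀ (F : BanachSp.{u}) (c : ℂ) (f : E.α → F.α), I.mem E U v F f →
      I.nrm E U v F (fun x => c • f x) = ‖c‖ * I.nrm E U v F f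
  hv_le_nrm : ∀ (E : BanachSp.{u}) (U : Set E.α) (v : E.α → ℝ), IsOpen U → IsWeight U v →
    ∀ (F : BanachSp.{u}) (f : E.α → F.α), I.mem E U v F f →
      hvNorm U v f ≤ I.nrm E U v F f
  unit_mem : ∀ (E : BanachSp.{u}) (U : Set E.α) (v : E.α → ℝ), IsOpen U → IsWeight U v →
    ∀ (F : BanachSp.{u}) (h : E.α → ℂ), HvBdd U v h → ∀ y : F.α,
      I.mem E U v F (fun x => h x • y) ∧
        I.nrm E U v F (fun x => h x • y) = hvNorm U v h * ‖y‖
  comp_mem : ∀ (E : BanachSp.{u}) (U : Set E.α) (v : E.α → ℝ), IsOpen U → IsWeight U v →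
    ∀ (V : Set E.α), IsOpen V → V ⊆ U →
    ∀ h : E.α → E.α, DifferentiableOn ℂ h V → Set.MapsTo h V U →
    ∀ c : ℝ, 0 ≤ c → (∀ x ∈ V, v x ≤ c * v (h x)) →
    ∀ (F G : BanachSp.{u}) (T : F.α →L[ℂ] G.α) (f : E.α → F.α), I.mem E U v F f →
      I.mem E V v G (fun x => T (f (h x))) ∧
        I.nrm E V v G (fun x => T (f (h x))) ≤ ‖T‖ * I.nrm E U v F f * c

/-- `[I, ‖·‖_I]` is a Banach weighted holomorphic ideal: a normed one with complete components. -/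
structure IsBanachWHIdeal (I : WHAssignment.{u}) extends IsNormedWHIdeal I : Prop where
  complete : ∀ (E : BanachSp.{u}) (U : Set E.α) (v : E.α → ℝ), IsOpen U → IsWeight U v →
    ∀ (F : BanachSp.{u}) (f : ℕ → E.α → F.α), (∀ n, I.mem E U v F (f n)) →
      (∀ ε : ℝ, 0 < ε → ∃ N : ℕ, ∀ m ≥ N, ∀ n ≥ N,
        I.nrm E U v F (fun x => f m x - f n x) < ε) →
      ∃ g : E.α → F.α, I.mem E U v F g ∧
        ∀ ε : ℝ, 0 < ε → ∃ N : ℕ, ∀ n ≥ N, I.nrm E U v F (fun x => f n x - g x) < ε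

/-- Injectivity of a normed weighted holomorphic ideal. -/
def WHInjective (I : WHAssignment.{u}) : Prop :=
  ∀ (E : BanachSp.{u}) (U : Set E.α) (v : E.α → ℝ), IsOpen U → IsWeight U v →
  ∀ (F G : BanachSp.{u}) (f : E.α → F.α), HvBdd U v f →
  ∀ ι : F.α →ₗᵢ[ℂ] G.α, I.mem E U v G (fun x => ι (f x)) →
    I.mem E U v F f ∧ I.nrm E U v F f = I.nrm E U v G (fun x => ι (f x))

/-- The injective hull `[I^inj, ‖·‖_{I^inj}]` of a weighted holomorphic ideal. -/
def whInj (I : WHAssignment.{u}) : WHAssignment.{u} where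
  mem E U v F f := HvBdd U v f ∧ I.mem E U v (LinfSp F.α) (fun x => iota F.α (f x))
  nrm E U v F f := I.nrm E U v (LinfSp F.α) (fun x => iota F.α (f x))

/-- The order relation `[I, ‖·‖_I] ≤ [J, ‖·‖_J]` between weighted holomorphic ideals. -/
def WHle (I J : WHAssignment.{u}) : Prop :=
  ∀ (E : BanachSp.{u}) (U : Set E.α) (v : E.α → ℝ), IsOpen U → IsWeight U v →
  ∀ (F : BanachSp.{u}) (f : E.α → F.α), I.mem E U v F f →
    J.mem E U v F f ∧ J.nrm E U v F f ≤ I.nrm E U v F f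

/-- The domination property: `‖Σ λᵢ v(xᵢ) f(xᵢ)‖ ≤ ‖Σ λᵢ v(xᵢ) g(xᵢ)‖` for all finite families. -/
def Dominates {E : Type u} {F : Type v} {G : Type w} [NormedAddCommGroup E] [NormedSpace ℂ E]
    [NormedAddCommGroup F] [NormedSpace ℂ F] [NormedAddCommGroup G] [NormedSpace ℂ G]
    (U : Set E) (v : E → ℝ) (f : E → F) (g : E → G) : Prop :=
  ∀ (n : ℕ) (lam : Fin n → ℂ) (x : Fin n → E), (∀ i, x i ∈ U) →
    ‖∑ i, lam i • v (x i) • f (x i)‖ ≤ ‖∑ i, lam i • v (x i) • g (x i)‖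

/-! The space `ℓ∞(Γ)` is `1`-injective: applying Hahn–Banach coordinatewise, every operator
into it extends along an isometric embedding without increasing its norm. Extending
`ι_G ∘ T` along `ι_F` gives an operator `ℓ∞(B_{F*}) → ℓ∞(B_{G*})` of norm at most `‖T‖`
intertwining the canonical embeddings, so the ideal property of `I` passes to `I^inj`;
extending `ι_F` along `ι_G ∘ ι` gives a norm-one retraction, which makes `I^inj` injective.
Minimality is immediate: if `I ≤ J` with `J` injective, then `ι_F ∘ f ∈ I ⊆ J` forces `f ∈ J`
with `‖f‖_J = ‖ι_F ∘ f‖_J ≤ ‖ι_F ∘ f‖_I`. -/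

section LpInftyExtension

variable {𝕜 : Type*} [RCLike 𝕜] {X Y : Type*} [NormedAddCommGroup X] [NormedSpace 𝕜 X]
  [NormedAddCommGroup Y] [NormedSpace 𝕜 Y] {Γ : Type*}

theorem LinearIsometry.exists_extension_norm_le (j : X →ₗᵢ[𝕜] Y) (φ : StrongDual 𝕜 X) :
    ∃ ψ : StrongDual 𝕜 Y, ‖ψ‖ ≤ ‖φ‖ ∧ ∀ x, ψ (j x) = φ x := by
  let e := j.equivRange
  obtain ⟨ψ, hψ, hψ_norm⟩ := exists_extension_norm_eq (LinearMap.range j.toLinearMap)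
    (φ.comp e.symm.toContinuousLinearEquiv.toContinuousLinearMap)
  refine ⟨ψ, ?_, fun x => ?_⟩
  · rw [hψ_norm]
    exact (φ.opNorm_comp_le _).trans
      (mul_le_of_le_one_right (norm_nonneg φ) e.symm.toLinearIsometry.norm_toContinuousLinearMap_le)
  · simpa [e] using hψ (e x)

theorem exists_lpInfty_of_norm_le (φ : Γ → StrongDual 𝕜 X) {C : ℝ} (hC0 : 0 ≤ C)
    (hC : ∀ i, ‖φ i‖ ≤ C) :
    ∃ A : X →L[𝕜] lp (fun _ : Γ => 𝕜) ∞, ‖A‖ ≤ C ∧ ∀ x i, A x i = φ i x := by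
  have hbound : ∀ x i, ‖φ i x‖ ≤ C * ‖x‖ := fun x i =>
    ((φ i).le_opNorm x).trans (mul_le_mul_of_nonneg_right (hC i) (norm_nonneg x))
  let A₀ : X →ₗ[𝕜] lp (fun _ : Γ => 𝕜) ∞ :=
    { toFun x := ⟨fun i => φ i x, memℓp_infty ⟨C * ‖x‖, by
        rintro - ⟨i, rfl⟩
        exact hbound x i⟩⟩
      map_add' x y := lp.ext (funext fun i => map_add (φ i) x y)
      map_smul' c x := lp.ext (funext fun i => map_smul (φ i) c x) }
  refine ⟨A₀.mkContinuous C fun x => ?_, LinearMap.mkContinuous_norm_le _ hC0 _, fun _ _ => rfl⟩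
  exact lp.norm_le_of_forall_le (by positivity) (hbound x)

theorem LinearIsometry.exists_lpInfty_extension (j : X →ₗᵢ[𝕜] Y)
    (A : X →L[𝕜] lp (fun _ : Γ => 𝕜) ∞) :
    ∃ B : Y →L[𝕜] lp (fun _ : Γ => 𝕜) ∞, ‖B‖ ≤ ‖A‖ ∧ ∀ x, B (j x) = A x := by
  have hcoord : ∀ i, ‖(lp.evalCLM 𝕜 (fun _ : Γ => 𝕜) ∞ i).comp A‖ ≤ ‖A‖ := fun i =>
    (ContinuousLinearMap.opNorm_comp_le _ _).trans
      (mul_le_of_le_one_left (norm_nonneg A) (LinearMap.mkContinuous_norm_le _ zero_le_one _))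
  choose ψ hψ_norm hψ using fun i => j.exists_extension_norm_le
    ((lp.evalCLM 𝕜 (fun _ : Γ => 𝕜) ∞ i).comp A)
  obtain ⟨B, hB_norm, hB⟩ := exists_lpInfty_of_norm_le ψ (norm_nonneg A)
    fun i => (hψ_norm i).trans (hcoord i)
  exact ⟨B, hB_norm, fun x => lp.ext (funext fun i => (hB _ i).trans (hψ i x))⟩

end LpInftyExtension

section Iota

variable {F G : Type u} [NormedAddCommGroup F] [NormedSpace ℂ F]
  [NormedAddCommGroup G] [NormedSpace ℂ G]

theorem norm_iota_le : ‖iota F‖ ≤ 1 :=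
  LinearMap.mkContinuous_norm_le _ zero_le_one _

theorem norm_iota (y : F) : ‖iota F y‖ = ‖y‖ := by
  refine le_antisymm ((iota F).le_of_opNorm_le norm_iota_le y |>.trans_eq (one_mul _)) ?_
  obtain ⟨g, hg, hgy⟩ := exists_dual_vector'' ℂ y
  calc ‖y‖ = ‖g y‖ := by simp [hgy]
    _ ≤ ‖iota F y‖ := lp.norm_apply_le_norm ENNReal.top_ne_zero (iota F y) ⟨g, hg⟩

def iotaₗᵢ : F →ₗᵢ[ℂ] Linf F :=
  ⟨(iota F).toLinearMap, norm_iota⟩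

theorem exists_lift_iota (T : F →L[ℂ] G) :
    ∃ S : Linf F →L[ℂ] Linf G, ‖S‖ ≤ ‖T‖ ∧ ∀ y, S (iota F y) = iota G (T y) := by
  obtain ⟨S, hS_norm, hS⟩ := iotaₗᵢ.exists_lpInfty_extension ((iota G).comp T)
  exact ⟨S, hS_norm.trans ((ContinuousLinearMap.opNorm_comp_le _ _).trans
    (mul_le_of_le_one_left (norm_nonneg T) norm_iota_le)), hS⟩

theorem exists_retraction_iota (ι : F →ₗᵢ[ℂ] G) :
    ∃ R : Linf G →L[ℂ] Linf F, ‖R‖ ≤ 1 ∧ ∀ y, R (iota G (ι y)) = iota F y := by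
  obtain ⟨R, hR_norm, hR⟩ := (iotaₗᵢ.comp ι).exists_lpInfty_extension (iota F)
  exact ⟨R, hR_norm.trans norm_iota_le, hR⟩

end Iota

theorem IsWeight.mono {E : Type*} [NormedAddCommGroup E] [NormedSpace ℂ E] {U V : Set E}
    {v : E → ℝ} (hw : IsWeight U v) (hVU : V ⊆ U) : IsWeight V v :=
  ⟨hw.1.mono hVU, fun x hx => hw.2 x (hVU hx)⟩

section HvBdd

variable {E F G : Type*} [NormedAddCommGroup F] [NormedSpace ℂ F] [NormedAddCommGroup G]
  [NormedSpace ℂ G] {U : Set E} {v : E → ℝ} {f : E → F}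

theorem hvNorm_comp_linearIsometry (j : F →ₗᵢ[ℂ] G) :
    hvNorm U v (fun x => j (f x)) = hvNorm U v f := by
  simp only [hvNorm, j.norm_map]

theorem HvBdd.of_comp_linearIsometry [NormedAddCommGroup E] [NormedSpace ℂ E]
    (j : F →ₗᵢ[ℂ] G) (hd : DifferentiableOn ℂ f U) (h : HvBdd U v fun x => j (f x)) : HvBdd U v f :=
  ⟨hd, by simpa only [j.norm_map] using h.2⟩

end HvBdd

section IdealTransfer

variable {I : WHAssignment.{u}} {E F G : BanachSp.{u}} {U : Set E.α} {v : E.α → ℝ}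

/- Stated pointwise so that equations proved in `Linf F` apply to functions valued in
`(LinfSp F).α`, whose bundled instances agree with those of `Linf F` only after unfolding. -/
theorem WHAssignment.mem_congr (I : WHAssignment.{u}) {f g : E.α → F.α} (hfg : ∀ x, f x = g x)
    (hf : I.mem E U v F f) : I.mem E U v F g :=
  funext hfg ▸ hf

theorem WHAssignment.nrm_congr (I : WHAssignment.{u}) {f g : E.α → F.α} (hfg : ∀ x, f x = g x) :
    I.nrm E U v F f = I.nrm E U v F g :=
  congrArg _ (funext hfg)

theorem IsNormedWHIdeal.comp_left (hI : IsNormedWHIdeal I) (hU : IsOpen U) (hw : IsWeight U v)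
    (T : F.α →L[ℂ] G.α) {f : E.α → F.α} {g : E.α → G.α} (hf : I.mem E U v F f)
    (hfg : ∀ x, T (f x) = g x) :
    I.mem E U v G g ∧ I.nrm E U v G g ≤ ‖T‖ * I.nrm E U v F f := by
  obtain ⟨hmem, hnrm⟩ := hI.comp_mem E U v hU hw U hU subset_rfl id differentiableOn_id
    (mapsTo_id U) 1 zero_le_one (fun x _ => (one_mul (v x)).ge) F G T f hf
  rw [mul_one] at hnrm
  exact ⟨I.mem_congr hfg hmem, (I.nrm_congr hfg).symm.trans_le hnrm⟩

theorem IsNormedWHIdeal.whInj_mem_of_differentiableOn (hI : IsNormedWHIdeal I)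
    (hU : IsOpen U) (hw : IsWeight U v) {f : E.α → F.α} (hd : DifferentiableOn ℂ f U)
    {g : E.α → (LinfSp F.α).α} (hg : I.mem E U v (LinfSp F.α) g) (hfg : ∀ x, g x = iota F.α (f x)) :
    (whInj I).mem E U v F f :=
  have hιf := I.mem_congr hfg hg
  ⟨(hI.mem_hv E U v hU hw _ _ hιf).of_comp_linearIsometry iotaₗᵢ hd, hιf⟩

end IdealTransfer

section InjectiveHull

variable {I : WHAssignment.{u}}

theorem le_whInj (hI : IsNormedWHIdeal I) : WHle I (whInj I) := by
  intro E U v hU hw F f hf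
  obtain ⟨hmem, hnrm⟩ := hI.comp_left hU hw (G := LinfSp F.α) (iota F.α) hf fun _ => rfl
  refine ⟨⟨hI.mem_hv E U v hU hw F f hf, hmem⟩, hnrm.trans ?_⟩
  exact mul_le_of_le_one_left (hI.nrm_nonneg E U v hU hw F f hf) norm_iota_le

theorem isNormedWHIdeal_whInj (hI : IsNormedWHIdeal I) : IsNormedWHIdeal (whInj I) where
  mem_hv _ _ _ _ _ _ _ hf := hf.1
  zero_mem E U v hU hw F := hI.whInj_mem_of_differentiableOn hU hw (differentiableOn_const 0)
    (hI.zero_mem E U v hU hw _) fun _ => (map_zero (iota F.α)).symm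
  add_mem E U v hU hw F f g hf hg := hI.whInj_mem_of_differentiableOn hU hw (hf.1.1.add hg.1.1)
    (hI.add_mem E U v hU hw _ _ _ hf.2 hg.2) fun x => (map_add (iota F.α) (f x) (g x)).symm
  smul_mem E U v hU hw F c f hf := hI.whInj_mem_of_differentiableOn hU hw (hf.1.1.const_smul c)
    (hI.smul_mem E U v hU hw _ c _ hf.2) fun x => (map_smul (iota F.α) c (f x)).symm
  nrm_nonneg E U v hU hw F f hf := hI.nrm_nonneg E U v hU hw _ _ hf.2
  nrm_eq_zero E U v hU hw F f hf h0 x hx :=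
    iotaₗᵢ.injective ((hI.nrm_eq_zero E U v hU hw _ _ hf.2 h0 x hx).trans (map_zero iotaₗᵢ).symm)
  nrm_add_le E U v hU hw F f g hf hg :=
    ((I.nrm_congr (F := LinfSp F.α) fun x => map_add (iota F.α) (f x) (g x))).trans_le
      (hI.nrm_add_le E U v hU hw _ _ _ hf.2 hg.2)
  nrm_smul E U v hU hw F c f hf :=
    ((I.nrm_congr (F := LinfSp F.α) fun x => map_smul (iota F.α) c (f x))).trans
      (hI.nrm_smul E U v hU hw _ c _ hf.2)
  hv_le_nrm E U v hU hw F f hf := by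
    rw [← hvNorm_comp_linearIsometry iotaₗᵢ]
    exact hI.hv_le_nrm E U v hU hw _ _ hf.2
  unit_mem E U v hU hw F h hh y := by
    obtain ⟨hmem, hnrm⟩ := hI.unit_mem E U v hU hw (LinfSp F.α) h hh (iota F.α y)
    have hιh : ∀ x, iota F.α (h x • y) = h x • iota F.α y := fun x => map_smul _ _ _
    refine ⟨hI.whInj_mem_of_differentiableOn hU hw (hh.1.smul_const y) hmem
      fun x => (hιh x).symm, ?_⟩
    exact (I.nrm_congr (F := LinfSp F.α) hιh).trans (hnrm.trans (congrArg _ (norm_iota y)))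
  comp_mem E U v hU hw V hV hVU h hh hmap c hc hvc F G T f hf := by
    obtain ⟨S, hS_norm, hS⟩ := exists_lift_iota T
    obtain ⟨hmem, hnrm⟩ := hI.comp_mem E U v hU hw V hV hVU h hh hmap c hc hvc _ (LinfSp G.α)
      S _ hf.2
    refine ⟨hI.whInj_mem_of_differentiableOn hV (hw.mono hVU)
      (T.differentiable.comp_differentiableOn (hf.1.1.comp hh hmap)) hmem fun x => hS _, ?_⟩
    have hnrm_nonneg := hI.nrm_nonneg E U v hU hw _ _ hf.2
    exact ((I.nrm_congr fun x => hS (f (h x))).symm.trans_le hnrm).trans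
      (mul_le_mul_of_nonneg_right (mul_le_mul_of_nonneg_right hS_norm hnrm_nonneg) hc)

theorem whInjective_whInj (hI : IsNormedWHIdeal I) : WHInjective (whInj I) := by
  intro E U v hU hw F G f hf ι hιf
  obtain ⟨R, hR_norm, hR⟩ := exists_retraction_iota ι
  obtain ⟨S, hS_norm, hS⟩ := exists_lift_iota ι.toContinuousLinearMap
  obtain ⟨hf_mem, hf_nrm⟩ := hI.comp_left hU hw (G := LinfSp F.α) R hιf.2 fun x => hR (f x)
  obtain ⟨-, hιf_nrm⟩ := hI.comp_left hU hw (G := LinfSp G.α) S hf_mem fun x => hS (f x)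
  refine ⟨⟨hf, hf_mem⟩, le_antisymm ?_ ?_⟩
  · exact hf_nrm.trans (mul_le_of_le_one_left (hI.nrm_nonneg E U v hU hw _ _ hιf.2) hR_norm)
  · exact hιf_nrm.trans (mul_le_of_le_one_left (hI.nrm_nonneg E U v hU hw _ _ hf_mem)
      (hS_norm.trans ι.norm_toContinuousLinearMap_le))

theorem whInj_le {J : WHAssignment.{u}} (hJ : WHInjective J) (hIJ : WHle I J) :
    WHle (whInj I) J := by
  intro E U v hU hw F f hf
  obtain ⟨hmem, hnrm⟩ := hIJ E U v hU hw _ _ hf.2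
  obtain ⟨hf_mem, hf_nrm⟩ := hJ E U v hU hw F (LinfSp F.α) f hf.1 iotaₗᵢ hmem
  exact ⟨hf_mem, hf_nrm.trans_le hnrm⟩

end InjectiveHull

/-- the injective hull is the smallest injective normed weighted holomorphic
ideal containing `I`. -/
theorem injective_hull_smallest (I : WHAssignment.{u}) (hI : IsNormedWHIdeal I) :
    WHle I (whInj I) ∧ IsNormedWHIdeal (whInj I) ∧ WHInjective (whInj I) ∧
      ∀ J : WHAssignment.{u}, IsNormedWHIdeal J → WHInjective J → WHle I J →
        WHle (whInj I) J :=
  ⟨le_whInj hI, isNormedWHIdeal_whInj hI, whInjective_whInj hI, fun _ _ hJ hIJ => whInj_le hJ hIJ⟩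
end
end

section
/- Let A be an operator ideal, let U be an open subset of a complex Banach space E with weight v, and let F be a complex Banach space. Then the component of the composition ideal of the closure of A equals the closure of the component of the composition ideal of A: \bar{A}∘H_v^∞(U,F) equals the closure of A∘H_v^∞(U,F) in the Banach space (H_v^∞(U,F), ‖·‖_v). -/
open scoped ENNReal
open Set

noncomputable section

universe u v w

/-- An assignment of a class of operators and a "norm" to every pair of Banach spaces. -/
structure OpAssignment : Type (u + 1) where
  mem : ∀ (E F : BanachSp.{u}), (E.α →L[ℂ] F.α) → Prop
  nrm : ∀ (E F : BanachSp.{u}), (E.α →L[ℂ] F.α) → ℝ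

/-- `A` is an operator ideal (no norm conditions). -/
structure IsOpIdeal (A : OpAssignment.{u}) : Prop where
  zero_mem : ∀ (E F : BanachSp.{u}), A.mem E F 0
  add_mem : ∀ (E F : BanachSp.{u}) (S T : E.α →L[ℂ] F.α),
    A.mem E F S → A.mem E F T → A.mem E F (S + T)
  rank_one_mem : ∀ (E F : BanachSp.{u}) (φ : E.α →L[ℂ] ℂ) (y : F.α),
    A.mem E F (φ.smulRight y)
  comp_mem : ∀ (E₀ E F F₀ : BanachSp.{u}) (R : E₀.α →L[ℂ] E.α) (T : E.α →L[ℂ] F.α)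
    (S : F.α →L[ℂ] F₀.α), A.mem E F T → A.mem E₀ F₀ ((S.comp T).comp R)

/-- `[A, ‖·‖_A]` is a normed operator ideal in the sense of Pietsch. -/
structure IsNormedOpIdeal (A : OpAssignment.{u}) : Prop where
  zero_mem : ∀ (E F : BanachSp.{u}), A.mem E F 0
  add_mem : ∀ (E F : BanachSp.{u}) (S T : E.α →L[ℂ] F.α),
    A.mem E F S → A.mem E F T → A.mem E F (S + T)
  smul_mem : ∀ (E F : BanachSp.{u}) (c : ℂ) (T : E.α →L[ℂ] F.α),
    A.mem E F T → A.mem E F (c • T)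
  nrm_nonneg : ∀ (E F : BanachSp.{u}) (T : E.α →L[ℂ] F.α), A.mem E F T → 0 ≤ A.nrm E F T
  nrm_add_le : ∀ (E F : BanachSp.{u}) (S T : E.α →L[ℂ] F.α), A.mem E F S → A.mem E F T →
    A.nrm E F (S + T) ≤ A.nrm E F S + A.nrm E F T
  nrm_smul : ∀ (E F : BanachSp.{u}) (c : ℂ) (T : E.α →L[ℂ] F.α), A.mem E F T →
    A.nrm E F (c • T) = ‖c‖ * A.nrm E F T
  op_le_nrm : ∀ (E F : BanachSp.{u}) (T : E.α →L[ℂ] F.α), A.mem E F T → ‖T‖ ≤ A.nrm E F T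
  rank_one_mem : ∀ (E F : BanachSp.{u}) (φ : E.α →L[ℂ] ℂ) (y : F.α),
    A.mem E F (φ.smulRight y) ∧ A.nrm E F (φ.smulRight y) = ‖φ‖ * ‖y‖
  comp_mem : ∀ (E₀ E F F₀ : BanachSp.{u}) (R : E₀.α →L[ℂ] E.α) (T : E.α →L[ℂ] F.α)
    (S : F.α →L[ℂ] F₀.α), A.mem E F T → A.mem E₀ F₀ ((S.comp T).comp R) ∧
      A.nrm E₀ F₀ ((S.comp T).comp R) ≤ ‖S‖ * A.nrm E F T * ‖R‖

/-- `[A, ‖·‖_A]` is a Banach operator ideal. -/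
structure IsBanachOpIdeal (A : OpAssignment.{u}) extends IsNormedOpIdeal A : Prop where
  complete : ∀ (E F : BanachSp.{u}) (T : ℕ → (E.α →L[ℂ] F.α)), (∀ n, A.mem E F (T n)) →
    (∀ ε : ℝ, 0 < ε → ∃ N : ℕ, ∀ m ≥ N, ∀ n ≥ N, A.nrm E F (T m - T n) < ε) →
    ∃ S, A.mem E F S ∧ ∀ ε : ℝ, 0 < ε → ∃ N : ℕ, ∀ n ≥ N, A.nrm E F (T n - S) < ε

/-- Injectivity of a normed operator ideal. -/
def OpInjective (A : OpAssignment.{u}) : Prop :=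
  ∀ (E F G : BanachSp.{u}) (ι : F.α →ₗᵢ[ℂ] G.α) (T : E.α →L[ℂ] F.α),
    A.mem E G (ι.toContinuousLinearMap.comp T) →
      A.mem E F T ∧ A.nrm E F T = A.nrm E G (ι.toContinuousLinearMap.comp T)

/-- The injective hull `[A^inj, ‖·‖_{A^inj}]` of an operator ideal. -/
def opInj (A : OpAssignment.{u}) : OpAssignment.{u} where
  mem E F T := A.mem E (LinfSp F.α) ((iota F.α).comp T)
  nrm E F T := A.nrm E (LinfSp F.α) ((iota F.α).comp T)

/-- The closure `\bar{A}` of an operator ideal, under the operator norm. -/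
def opClosure (A : OpAssignment.{u}) : OpAssignment.{u} where
  mem E F T := ∀ ε : ℝ, 0 < ε → ∃ S, A.mem E F S ∧ ‖T - S‖ ≤ ε
  nrm E F T := ‖T‖

/-- The composition ideal `[A ∘ H_v^∞, ‖·‖_{A ∘ H_v^∞}]`. -/
def compWH (A : OpAssignment.{u}) : WHAssignment.{u} where
  mem E U v F f := ∃ (G : BanachSp.{u}) (T : G.α →L[ℂ] F.α) (g : E.α → G.α),
    A.mem G F T ∧ HvBdd U v g ∧ ∀ x ∈ U, f x = T (g x)
  nrm E U v F f := sInf {r | ∃ (G : BanachSp.{u}) (T : G.α →L[ℂ] F.α) (g : E.α → G.α),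
    A.mem G F T ∧ HvBdd U v g ∧ (∀ x ∈ U, f x = T (g x)) ∧ r = A.nrm G F T * hvNorm U v g}

/-- The closure of a weighted holomorphic ideal in `(H_v^∞, ‖·‖_v)`. -/
def whClosure (I : WHAssignment.{u}) : WHAssignment.{u} where
  mem E U v F f := HvBdd U v f ∧ ∀ ε : ℝ, 0 < ε → ∃ g : E.α → F.α,
    I.mem E U v F g ∧ ∀ x ∈ U, v x * ‖f x - g x‖ ≤ ε
  nrm E U v F f := hvNorm U v f

/-!
`⊆` is a direct estimate: `v x * ‖T (g x) - S (g x)‖ ≤ ‖T - S‖ * ‖g‖_v`.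

For `⊇`, take approximants `T n ∘ g n` of `f` with `‖g n‖_v ≤ 1` and map `U` holomorphically
into `F × ℓ∞(B) × ℓ∞((G n)ₙ)` by `p₀ x = (f x, (h x)_{h ∈ B}, (g n x)ₙ)`, where `B` is the closed
unit ball of `H_v^∞(U)`. Then `f` factors through the first projection, restricted to the closed
span `H` of `p₀ '' U`. The `ℓ∞(B)`-component plays the role of the canonical predual of
`H_v^∞(U)`: if `K ∘ p₀` has weighted norm at most `c`, then for each `ψ` in the unit ball of `F*`
the map `ψ ∘ K ∘ p₀` is `c` times an element of `B`, so `ψ ∘ K` agrees on `H` with `c` times a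
coordinate functional of `ℓ∞(B)`, and `‖K‖ ≤ c` on `H`. With `K = fst - T n ∘ πₙ` this puts the
first projection within `1 / (n + 1)` of the ideal. Holomorphy of the `ℓ∞`-valued maps comes
from Cauchy estimates that are uniform in the coordinate.
-/

open Metric Filter Asymptotics Topology

section Holomorphic

variable {𝔼 W : Type*} [NormedAddCommGroup 𝔼] [NormedSpace ℂ 𝔼] [NormedAddCommGroup W]
  [NormedSpace ℂ W] {f : 𝔼 → W} {c z : 𝔼} {r M : ℝ}

lemma norm_fderiv_le_of_norm_le (hd : DifferentiableOn ℂ f (ball c r))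
    (hb : ∀ y ∈ ball c r, ‖f y‖ ≤ M) (hr : 0 < r) : ‖fderiv ℂ f c‖ ≤ 2 * M / r := by
  refine Complex.norm_fderiv_le_div_of_mapsTo_ball hd (fun y hy => ?_) hr
  rw [mem_closedBall, dist_eq_norm, two_mul]
  exact (norm_sub_le _ _).trans (add_le_add (hb y hy) (hb c (mem_ball_self hr)))

/-- The second-order Schwarz lemma, applied to `f` minus its linear part at `c`. -/
lemma norm_sub_sub_fderiv_le_of_norm_le (hd : DifferentiableOn ℂ f (ball c r))
    (hb : ∀ y ∈ ball c r, ‖f y‖ ≤ M) (hz : z ∈ ball c r) :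
    ‖f z - f c - fderiv ℂ f c (z - c)‖ ≤ 4 * M * (dist z c / r) ^ 2 := by
  have hr : 0 < r := pos_of_mem_ball hz
  have hM : 0 ≤ M := (norm_nonneg _).trans (hb c (mem_ball_self hr))
  set D := fderiv ℂ f c
  have hD : ‖D‖ ≤ 2 * M / r := norm_fderiv_le_of_norm_le hd hb hr
  set g : 𝔼 → W := fun w => f w - D (w - c)
  have hg : ∀ w, g w - g c = f w - f c - D (w - c) := fun w => by simp [g]; abel
  have hgd : DifferentiableOn ℂ g (ball c r) :=
    hd.sub ((D.differentiable.comp (differentiable_id.sub_const c)).differentiableOn)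
  have hmaps : MapsTo g (ball c r) (closedBall (g c) (4 * M)) := by
    intro w hw
    have hw' : ‖w - c‖ ≤ r := by rw [← dist_eq_norm]; exact (mem_ball.1 hw).le
    rw [mem_closedBall, dist_eq_norm, hg]
    calc ‖f w - f c - D (w - c)‖ ≤ (‖f w‖ + ‖f c‖) + ‖D‖ * ‖w - c‖ :=
          (norm_sub_le _ _).trans (add_le_add (norm_sub_le _ _) (D.le_opNorm _))
      _ ≤ (M + M) + 2 * M / r * r := by
          gcongr
          · exact hb w hw
          · exact hb c (mem_ball_self hr)
      _ = 4 * M := by field_simp; ring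
  have hlo : (g · - g c) =o[𝓝 c] (fun w => ‖w - c‖ ^ 1) := by
    simp only [hg, pow_one]
    exact ((hd.differentiableAt (ball_mem_nhds c hr)).hasFDerivAt.isLittleO).norm_right
  have := Complex.dist_le_mul_div_pow_of_mapsTo_ball_of_isLittleO hgd hmaps hlo hz
  rwa [dist_eq_norm, hg] at this

end Holomorphic

section LpInfty

variable {𝔼 : Type*} [NormedAddCommGroup 𝔼] [NormedSpace ℂ 𝔼] {ι : Type*} {W : ι → Type*}
  [∀ i, NormedAddCommGroup (W i)] [∀ i, NormedSpace ℂ (W i)]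

def lpInftyOfBounded (L : ∀ i, 𝔼 →L[ℂ] W i) {C : ℝ} (hL : ∀ i, ‖L i‖ ≤ C) : 𝔼 →L[ℂ] lp W ∞ :=
  LinearMap.mkContinuousOfExistsBound
    { toFun := fun u => ⟨fun i => L i u,
        memℓp_infty ⟨C * ‖u‖, by rintro _ ⟨i, rfl⟩; exact (L i).le_of_opNorm_le (hL i) u⟩⟩
      map_add' := fun a b => lp.ext <| funext fun i => map_add (L i) a b
      map_smul' := fun c a => lp.ext <| funext fun i => map_smul (L i) c a }
    ⟨max C 0, fun u => lp.norm_le_of_forall_le (by positivity) fun i =>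
      (L i).le_of_opNorm_le ((hL i).trans (le_max_left _ _)) u⟩

lemma differentiableAt_lp_infty_of_ball {Q : 𝔼 → lp W ∞} {x : 𝔼} {r M : ℝ} (hr : 0 < r)
    (hd : ∀ i, DifferentiableOn ℂ (fun y => Q y i) (ball x r)) (hb : ∀ y ∈ ball x r, ‖Q y‖ ≤ M) :
    DifferentiableAt ℂ Q x := by
  have hM : 0 ≤ M := (norm_nonneg _).trans (hb x (mem_ball_self hr))
  have hcoord : ∀ i, ∀ y ∈ ball x r, ‖Q y i‖ ≤ M := fun i y hy =>
    (lp.norm_apply_le_norm ENNReal.top_ne_zero _ i).trans (hb y hy)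
  have hD : ∀ i, ‖fderiv ℂ (fun y => Q y i) x‖ ≤ 2 * M / r := fun i =>
    norm_fderiv_le_of_norm_le (hd i) (hcoord i) hr
  refine ⟨lpInftyOfBounded _ hD, ?_⟩
  rw [hasFDerivAt_iff_isLittleO_nhds_zero]
  refine IsBigO.trans_isLittleO (g := fun u : 𝔼 => ‖u‖ ^ 2) ?_ (isLittleO_norm_pow_id one_lt_two)
  refine IsBigO.of_bound (4 * M / r ^ 2) ?_
  filter_upwards [ball_mem_nhds (0 : 𝔼) hr] with u hu
  have hxu : x + u ∈ ball x r := by simpa using hu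
  rw [norm_pow, norm_norm]
  refine lp.norm_le_of_forall_le (by positivity) fun i => ?_
  have := norm_sub_sub_fderiv_le_of_norm_le (hd i) (hcoord i) hxu
  rw [dist_eq_norm, add_sub_cancel_left] at this
  calc ‖(Q (x + u) - Q x - lpInftyOfBounded _ hD u) i‖
      = ‖Q (x + u) i - Q x i - fderiv ℂ (fun y => Q y i) x u‖ := rfl
    _ ≤ 4 * M * (‖u‖ / r) ^ 2 := this
    _ = 4 * M / r ^ 2 * ‖u‖ ^ 2 := by ring

lemma differentiableOn_lp_infty {Q : 𝔼 → lp W ∞} {U : Set 𝔼} (hU : IsOpen U)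
    (hd : ∀ i, DifferentiableOn ℂ (fun y => Q y i) U)
    (hb : ∀ x ∈ U, ∃ M, ∀ᶠ y in 𝓝 x, ‖Q y‖ ≤ M) : DifferentiableOn ℂ Q U := by
  intro x hx
  obtain ⟨M, hM⟩ := hb x hx
  obtain ⟨r, hr, hball⟩ := Metric.eventually_nhds_iff_ball.1 (hM.and (hU.mem_nhds hx))
  exact (differentiableAt_lp_infty_of_ball hr (fun i => (hd i).mono fun y hy => (hball y hy).2)
    fun y hy => (hball y hy).1).differentiableWithinAt

end LpInfty

section ClosedSubmodule

variable {𝕜 : Type*} [NontriviallyNormedField 𝕜] {𝔼 P : Type*} [NormedAddCommGroup 𝔼]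
  [NormedSpace 𝕜 𝔼] [NormedAddCommGroup P] [NormedSpace 𝕜 P]

lemma tangentConeAt_subset_of_isClosed_submodule {G : Submodule 𝕜 P} (hG : IsClosed (G : Set P))
    {p : P} (hp : p ∈ G) : tangentConeAt 𝕜 (G : Set P) p ⊆ G := by
  intro y hy
  obtain ⟨α, l, hl, c, d, -, hds, hcd⟩ := exists_fun_of_mem_tangentConeAt hy
  refine hG.mem_of_tendsto hcd (hds.mono fun n hn => G.smul_mem (c n) ?_)
  simpa using G.sub_mem hn hp

lemma differentiableAt_of_differentiableAt_coe {G : Submodule 𝕜 P} (hG : IsClosed (G : Set P))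
    {g : 𝔼 → G} {x : 𝔼} (h : DifferentiableAt 𝕜 (fun y => (g y : P)) x) :
    DifferentiableAt 𝕜 g x := by
  have hD := h.hasFDerivAt
  have hmem : ∀ u, fderiv 𝕜 (fun y => (g y : P)) x u ∈ G := by
    intro u
    refine tangentConeAt_subset_of_isClosed_submodule hG (g x).2
      (tangentConeAt_mono ?_ (hD.hasFDerivWithinAt.mapsTo_tangent_cone (s := univ) ?_))
    · rintro _ ⟨y, -, rfl⟩
      exact (g y).2
    · rw [tangentConeAt_univ]; trivial
  refine ⟨(fderiv 𝕜 (fun y => (g y : P)) x).codRestrict G hmem, ?_⟩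
  rw [hasFDerivAt_iff_isLittleO_nhds_zero, ← isLittleO_norm_left]
  simpa [← Submodule.norm_coe] using (hasFDerivAt_iff_isLittleO_nhds_zero.1 hD).norm_left

end ClosedSubmodule

section Weighted

variable {E P Q : Type*} [NormedAddCommGroup E] [NormedSpace ℂ E] [NormedAddCommGroup P]
  [NormedSpace ℂ P] [NormedAddCommGroup Q] [NormedSpace ℂ Q] {U : Set E} {v : E → ℝ}

lemma HvBdd.of_bound {g : E → P} (hd : DifferentiableOn ℂ g U) {M : ℝ}
    (hM : ∀ x ∈ U, v x * ‖g x‖ ≤ M) : HvBdd U v g :=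
  ⟨hd, M, forall_mem_image.2 hM⟩

lemma HvBdd.exists_bound {g : E → P} (hg : HvBdd U v g) : ∃ M, ∀ x ∈ U, v x * ‖g x‖ ≤ M := by
  obtain ⟨M, hM⟩ := hg.2
  exact ⟨M, forall_mem_image.1 hM⟩

lemma HvBdd.congr {f g : E → P} (hg : HvBdd U v g) (h : EqOn f g U) : HvBdd U v f := by
  obtain ⟨M, hM⟩ := hg.exists_bound
  exact .of_bound (hg.1.congr h) fun x hx => h hx ▸ hM x hx

lemma mul_norm_clm_apply_le {t : ℝ} (ht : 0 ≤ t) (T : P →L[ℂ] Q) (y : P) :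
    t * ‖T y‖ ≤ ‖T‖ * (t * ‖y‖) := by
  rw [mul_left_comm]
  exact mul_le_mul_of_nonneg_left (T.le_opNorm y) ht

lemma HvBdd.clm_comp (hv : ∀ x ∈ U, 0 ≤ v x) (T : P →L[ℂ] Q) {g : E → P} (hg : HvBdd U v g) :
    HvBdd U v (fun x => T (g x)) := by
  obtain ⟨M, hM⟩ := hg.exists_bound
  exact .of_bound (T.differentiable.comp_differentiableOn hg.1) fun x hx =>
    (mul_norm_clm_apply_le (hv x hx) T _).trans
      (mul_le_mul_of_nonneg_left (hM x hx) (norm_nonneg T))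

lemma HvBdd.prodMk (hv : ∀ x ∈ U, 0 ≤ v x) {a : E → P} {b : E → Q} (ha : HvBdd U v a)
    (hb : HvBdd U v b) : HvBdd U v (fun x => (a x, b x)) := by
  obtain ⟨Ma, hMa⟩ := ha.exists_bound
  obtain ⟨Mb, hMb⟩ := hb.exists_bound
  refine .of_bound (ha.1.prodMk hb.1) (M := max Ma Mb) fun x hx => ?_
  rw [Prod.norm_def, mul_max_of_nonneg _ _ (hv x hx)]
  exact max_le_max (hMa x hx) (hMb x hx)

lemma exists_hvBdd_lp_infty {ι : Type*} {W : ι → Type*} [∀ i, NormedAddCommGroup (W i)]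
    [∀ i, NormedSpace ℂ (W i)] (hU : IsOpen U) (hv : IsWeight U v) (q : ∀ i, E → W i)
    (hq : ∀ i, DifferentiableOn ℂ (q i) U) (hqv : ∀ i, ∀ x ∈ U, v x * ‖q i x‖ ≤ 1) :
    ∃ Q : E → lp W ∞, HvBdd U v Q ∧ ∀ x ∈ U, ∀ i, Q x i = q i x := by
  classical
  have hle : ∀ x ∈ U, ∀ i, ‖q i x‖ ≤ (v x)⁻¹ := fun x hx i => by
    rw [← one_div, le_div_iff₀' (hv.2 x hx)]
    exact hqv i x hx
  let Q : E → lp W ∞ := fun x =>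
    if hx : x ∈ U then ⟨fun i => q i x, memℓp_infty ⟨_, forall_mem_range.2 (hle x hx)⟩⟩ else 0
  have hQ : ∀ x ∈ U, ∀ i, Q x i = q i x := fun x hx i => by simp [Q, hx]
  have hQle : ∀ x ∈ U, ‖Q x‖ ≤ (v x)⁻¹ := fun x hx =>
    lp.norm_le_of_forall_le (inv_nonneg.2 (hv.2 x hx).le) fun i => hQ x hx i ▸ hle x hx i
  refine ⟨Q, .of_bound ?_ (M := 1) fun x hx => ?_, hQ⟩
  · refine differentiableOn_lp_infty hU (fun i => (hq i).congr fun x hx => hQ x hx i)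
      fun x hx => ⟨(v x)⁻¹ + 1, ?_⟩
    have hinv : ContinuousAt (fun y => (v y)⁻¹) x :=
      ((hv.1.continuousAt (hU.mem_nhds hx))).inv₀ (hv.2 x hx).ne'
    filter_upwards [hinv.eventually (gt_mem_nhds (lt_add_one _)), hU.mem_nhds hx] with y hy hyU
    exact (hQle y hyU).trans hy.le
  · rw [← le_div_iff₀' (hv.2 x hx), one_div]
    exact hQle x hx

lemma exists_hvBdd_codRestrict {G : Submodule ℂ P} (hG : IsClosed (G : Set P)) (hU : IsOpen U)
    {g : E → P} (hg : HvBdd U v g) (hmem : ∀ x ∈ U, g x ∈ G) :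
    ∃ g' : E → G, HvBdd U v g' ∧ ∀ x ∈ U, (g' x : P) = g x := by
  classical
  let g' : E → G := fun x => if hx : x ∈ U then ⟨g x, hmem x hx⟩ else 0
  have hg' : ∀ x ∈ U, (g' x : P) = g x := fun x hx => by simp [g', hx]
  obtain ⟨M, hM⟩ := hg.exists_bound
  refine ⟨g', .of_bound (M := M) (fun x hx => ?_) fun x hx => ?_, hg'⟩
  · refine (differentiableAt_of_differentiableAt_coe hG ?_).differentiableWithinAt
    exact ((hg.1.differentiableAt (hU.mem_nhds hx)).congr_of_eventuallyEq
      (eventually_of_mem (hU.mem_nhds hx) hg'))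
  · rw [← Submodule.norm_coe, hg' x hx]
    exact hM x hx

end Weighted

lemma ContinuousLinearMap.norm_comp_subtypeL_closure_span_le {𝕜 P F : Type*} [RCLike 𝕜]
    [NormedAddCommGroup P] [NormedSpace 𝕜 P] [NormedAddCommGroup F] [NormedSpace 𝕜 F]
    (K : P →L[𝕜] F) (s : Set P) {ε : ℝ} (hε : 0 ≤ ε)
    (h : ∀ ψ : StrongDual 𝕜 F, ‖ψ‖ ≤ 1 →
      ∃ Λ : StrongDual 𝕜 P, ‖Λ‖ ≤ ε ∧ ∀ p ∈ s, ψ (K p) = Λ p) :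
    ‖K ∘L (Submodule.span 𝕜 s).topologicalClosure.subtypeL‖ ≤ ε := by
  refine ContinuousLinearMap.opNorm_le_bound _ hε fun p => ?_
  obtain ⟨ψ, hψ, hψp⟩ := exists_dual_vector'' 𝕜 (K p)
  obtain ⟨Λ, hΛ, hΛs⟩ := h ψ hψ
  have hagree : ψ (K p) = Λ p :=
    (ψ ∘L K).eqOn_closure_span (s := s) (g := Λ) hΛs p.2
  calc ‖(K ∘L _) p‖ = ‖ψ (K p)‖ := by simp [hψp]
    _ = ‖Λ p‖ := by rw [hagree]
    _ ≤ ε * ‖p‖ := (Λ.le_opNorm _).trans (mul_le_mul_of_nonneg_right hΛ (norm_nonneg _))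

section UnitBall

variable {E : Type*} [NormedAddCommGroup E] [NormedSpace ℂ E] {U : Set E} {v : E → ℝ}

def HvUnitBall (U : Set E) (v : E → ℝ) : Type _ :=
  {h : E → ℂ // DifferentiableOn ℂ h U ∧ ∀ x ∈ U, v x * ‖h x‖ ≤ 1}

lemma exists_dual_comp_eq_of_weighted_bound {Δ : E → lp (fun _ : HvUnitBall U v => ℂ) ∞}
    (hΔ : ∀ x ∈ U, ∀ h, Δ x h = h.1 x) {k : E → ℂ} (hk : DifferentiableOn ℂ k U) {c : ℝ}
    (hc : 0 < c) (hkc : ∀ x ∈ U, v x * ‖k x‖ ≤ c) :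
    ∃ Λ : StrongDual ℂ (lp (fun _ : HvUnitBall U v => ℂ) ∞), ‖Λ‖ ≤ c ∧
      ∀ x ∈ U, Λ (Δ x) = k x := by
  let h : HvUnitBall U v := ⟨fun x => (c⁻¹ : ℂ) * k x, hk.const_mul _, fun x hx => by
    rw [norm_mul, norm_inv, Complex.norm_real, Real.norm_of_nonneg hc.le, mul_left_comm,
      inv_mul_le_one₀ hc]
    exact hkc x hx⟩
  refine ⟨(c : ℂ) • lp.evalCLM ℂ (fun _ : HvUnitBall U v => ℂ) ∞ h, ?_, fun x hx => ?_⟩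
  · rw [norm_smul, Complex.norm_real, Real.norm_of_nonneg hc.le]
    exact mul_le_of_le_one_right hc.le (LinearMap.mkContinuous_norm_le _ zero_le_one _)
  · have hc' : (c : ℂ) ≠ 0 := Complex.ofReal_ne_zero.2 hc.ne'
    change (c : ℂ) * Δ x h = k x
    rw [hΔ x hx]
    simp [h, hc']

lemma norm_comp_subtypeL_closure_span_le_of_weighted_bound {P F : Type*} [NormedAddCommGroup P]
    [NormedSpace ℂ P] [NormedAddCommGroup F] [NormedSpace ℂ F] (hv : ∀ x ∈ U, 0 ≤ v x)
    (π : P →L[ℂ] lp (fun _ : HvUnitBall U v => ℂ) ∞) (hπ : ‖π‖ ≤ 1) {p₀ : E → P}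
    (hp₀ : DifferentiableOn ℂ p₀ U) (hπp₀ : ∀ x ∈ U, ∀ h, π (p₀ x) h = h.1 x) (K : P →L[ℂ] F)
    {c : ℝ} (hc : 0 < c) (hKc : ∀ x ∈ U, v x * ‖K (p₀ x)‖ ≤ c) :
    ‖K ∘L (Submodule.span ℂ (p₀ '' U)).topologicalClosure.subtypeL‖ ≤ c := by
  refine K.norm_comp_subtypeL_closure_span_le _ hc.le fun ψ hψ => ?_
  obtain ⟨Λ, hΛ, hΛeq⟩ := exists_dual_comp_eq_of_weighted_bound (Δ := fun x => π (p₀ x)) hπp₀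
    ((ψ ∘L K).differentiable.comp_differentiableOn hp₀) hc fun x hx =>
      (mul_norm_clm_apply_le (hv x hx) ψ _).trans <|
        (mul_le_of_le_one_left (mul_nonneg (hv x hx) (norm_nonneg _)) hψ).trans (hKc x hx)
  refine ⟨Λ ∘L π, (Λ.opNorm_comp_le π).trans ?_, ?_⟩
  · exact (mul_le_of_le_one_right (norm_nonneg Λ) hπ).trans hΛ
  · rintro _ ⟨x, hx, rfl⟩
    exact (hΛeq x hx).symm

end UnitBall

section CompositionIdeal

variable {A : OpAssignment.{u}} {E F : BanachSp.{u}} {U : Set E.α} {v : E.α → ℝ}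

lemma exists_factorization_le_one_of_mem_compWH (hA : IsOpIdeal A) {f : E.α → F.α}
    (hf : (compWH A).mem E U v F f) :
    ∃ (G : BanachSp.{u}) (T : G.α →L[ℂ] F.α) (g : E.α → G.α), A.mem G F T ∧
      DifferentiableOn ℂ g U ∧ (∀ x ∈ U, v x * ‖g x‖ ≤ 1) ∧ ∀ x ∈ U, f x = T (g x) := by
  obtain ⟨G, T, g, hT, hg, hfg⟩ := hf
  obtain ⟨M, hM⟩ := hg.exists_bound
  set c : ℝ := max M 0 + 1
  have hc : 0 < c := by positivity
  have hc' : (c : ℂ) ≠ 0 := Complex.ofReal_ne_zero.2 hc.ne'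
  refine ⟨G, (c : ℂ) • T, fun x => (c⁻¹ : ℂ) • g x, ?_, hg.1.const_smul _, fun x hx => ?_,
    fun x hx => ?_⟩
  · simpa using hA.comp_mem G G F F (.id ℂ G.α) T ((c : ℂ) • .id ℂ F.α) hT
  · rw [norm_smul, norm_inv, Complex.norm_real, Real.norm_of_nonneg hc.le, mul_left_comm,
      inv_mul_le_one₀ hc]
    exact (hM x hx).trans ((le_max_left _ _).trans (le_add_of_nonneg_right zero_le_one))
  · rw [hfg x hx, smul_apply, map_smul, smul_smul, mul_inv_cancel₀ hc',
      one_smul]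

lemma mem_whClosure_compWH_of_mem_compWH_opClosure (hv : IsWeight U v) {f : E.α → F.α}
    (hf : (compWH (opClosure A)).mem E U v F f) : (whClosure (compWH A)).mem E U v F f := by
  obtain ⟨G, T, g, hT, hg, hfg⟩ := hf
  have hv0 : ∀ x ∈ U, 0 ≤ v x := fun x hx => (hv.2 x hx).le
  obtain ⟨M, hM⟩ := hg.exists_bound
  have hM1 : 0 < max M 0 + 1 := by positivity
  refine ⟨(hg.clm_comp hv0 T).congr hfg, fun ε hε => ?_⟩
  obtain ⟨S, hS, hTS⟩ := hT (ε / (max M 0 + 1)) (by positivity)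
  refine ⟨fun x => S (g x), ⟨G, S, g, hS, hg, fun _ _ => rfl⟩, fun x hx => ?_⟩
  calc v x * ‖f x - S (g x)‖ = v x * ‖(T - S) (g x)‖ := by rw [hfg x hx]; rfl
    _ ≤ ‖T - S‖ * (v x * ‖g x‖) := mul_norm_clm_apply_le (hv0 x hx) _ _
    _ ≤ ε / (max M 0 + 1) * (max M 0 + 1) :=
        mul_le_mul hTS ((hM x hx).trans (by linarith [le_max_left M 0]))
          (mul_nonneg (hv0 x hx) (norm_nonneg _)) (by positivity)
    _ = ε := div_mul_cancel₀ _ hM1.ne'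

lemma mem_compWH_opClosure_of_mem_whClosure_compWH (hA : IsOpIdeal A) (hU : IsOpen U)
    (hv : IsWeight U v) {f : E.α → F.α} (hf : (whClosure (compWH A)).mem E U v F f) :
    (compWH (opClosure A)).mem E U v F f := by
  obtain ⟨hf, happrox⟩ := hf
  have hv0 : ∀ x ∈ U, 0 ≤ v x := fun x hx => (hv.2 x hx).le
  choose f' hf' hff' using fun n : ℕ => happrox (1 / (n + 1)) (by positivity)
  choose G T g hT hgd hgv hf'eq using
    fun n => exists_factorization_le_one_of_mem_compWH hA (hf' n)
  obtain ⟨Δ, hΔ, hΔeq⟩ := exists_hvBdd_lp_infty hU hv (fun h : HvUnitBall U v => h.1)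
    (fun h => h.2.1) (fun h => h.2.2)
  obtain ⟨γ, hγ, hγeq⟩ := exists_hvBdd_lp_infty (W := fun n => (G n).α) hU hv g hgd hgv
  set p₀ := fun x => (f x, Δ x, γ x)
  set H := (Submodule.span ℂ (p₀ '' U)).topologicalClosure
  have hH := Submodule.isClosed_topologicalClosure (Submodule.span ℂ (p₀ '' U))
  have : CompleteSpace H := hH.completeSpace_coe
  have hp₀ : HvBdd U v p₀ := hf.prodMk hv0 (hΔ.prodMk hv0 hγ)
  obtain ⟨q, hq, hqeq⟩ := exists_hvBdd_codRestrict hH hU hp₀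
    fun x hx => Submodule.le_topologicalClosure _ (Submodule.subset_span (mem_image_of_mem _ hx))
  refine ⟨⟨H⟩, .fst ℂ _ _ ∘L H.subtypeL, q, fun ε hε => ?_, hq,
    fun x hx => by simp [hqeq x hx, p₀]⟩
  obtain ⟨n, hn⟩ := exists_nat_one_div_lt hε
  let Rn := lp.evalCLM ℂ (fun n => (G n).α) ∞ n ∘L
    .snd ℂ (lp (fun _ : HvUnitBall U v => ℂ) ∞) _ ∘L .snd ℂ F.α _
  refine ⟨(T n ∘L Rn) ∘L H.subtypeL,
    by simpa [ContinuousLinearMap.comp_assoc] using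
      hA.comp_mem ⟨H⟩ (G n) F F (Rn ∘L H.subtypeL) (T n) (.id ℂ F.α) (hT n), ?_⟩
  rw [← ContinuousLinearMap.sub_comp]
  let π := ContinuousLinearMap.fst ℂ (lp (fun _ : HvUnitBall U v => ℂ) ∞)
    (lp (fun n => (G n).α) ∞) ∘L .snd ℂ F.α _
  have hπ : ‖π‖ ≤ 1 :=
    (ContinuousLinearMap.opNorm_comp_le _ _).trans (mul_le_one₀
      (ContinuousLinearMap.norm_fst_le ..) (norm_nonneg _) (ContinuousLinearMap.norm_snd_le ..))
  have hπp₀ : ∀ x ∈ U, ∀ h, π (p₀ x) h = h.1 x := fun x hx h => hΔeq x hx h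
  refine (norm_comp_subtypeL_closure_span_le_of_weighted_bound hv0 π hπ hp₀.1 hπp₀ _
    (by positivity) fun x hx => ?_).trans hn.le
  have hRn : Rn (p₀ x) = g n x := hγeq x hx n
  simpa [hRn, p₀, ← hf'eq n x hx] using hff' n x hx

end CompositionIdeal

/-- the component of the composition ideal generated by the closure of `A`
equals the closure of the component of `A ∘ H_v^∞` in `(H_v^∞(U, F), ‖·‖_v)`. -/
theorem comp_closure_eq_closure_comp (A : OpAssignment.{u}) (hA : IsOpIdeal A)
    (E : BanachSp.{u}) (U : Set E.α) (v : E.α → ℝ) (hU : IsOpen U) (hv : IsWeight U v)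
    (F : BanachSp.{u}) :
    ∀ f : E.α → F.α,
      (compWH (opClosure A)).mem E U v F f ↔ (whClosure (compWH A)).mem E U v F f := fun _ =>
  ⟨mem_whClosure_compWH_of_mem_compWH_opClosure hv,
    mem_compWH_opClosure_of_mem_whClosure_compWH hA hU hv⟩
end
end
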